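/- Let n, d, ℓ be integers with 0 ≤ ℓ < d ≤ ⌊(n+ℓ−1)/2⌋. Then the graph H′_{n,d,ℓ} is not ℓ-hamiltonian: more precisely, no path with ℓ edges spanning the ℓ+1 dominating vertices (the identified vertices) of H′_{n,d,ℓ} can be extended to a hamiltonian cycle of H′_{n,d,ℓ}. -/

import Mathlib

open SimpleGraph

/-- A linear forest: an acyclic graph with maximum degree at most 2. -/
def SimpleGraph.IsLinearForest {V : Type*} (F : SimpleGraph V) : Prop :=
  F.IsAcyclic ∧ ∀ v a b c : V, F.Adj v a → F.Adj v b → F.Adj v c → a = b ∨ a = c ∨ b = c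

/-- A graph is `ℓ`-hamiltonian if every linear forest with `ℓ` edges contained in it
extends to a hamiltonian cycle. -/
def SimpleGraph.IsLHamiltonian {V : Type*} [DecidableEq V] (G : SimpleGraph V) (ℓ : ℕ) : Prop :=
  ∀ F : SimpleGraph V, F ≤ G → F.IsLinearForest → F.edgeSet.ncard = ℓ →
    ∃ (v : V) (c : G.Walk v v), c.IsHamiltonianCycle ∧ ∀ e ∈ F.edgeSet, e ∈ c.edges

/-- The graph `H_{n,d,ℓ}`: a complete graph on `A = {0, …, n-d+ℓ-1}` together with `d-ℓ`
further vertices, each adjacent to the set `B = {0, …, d-1} ⊆ A`. -/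
def Hgraph (n d ℓ : ℕ) : SimpleGraph (Fin n) where
  Adj u v := u ≠ v ∧ ((u.val < n - d + ℓ ∧ v.val < n - d + ℓ) ∨
    (u.val < d ∧ n - d + ℓ ≤ v.val) ∨ (v.val < d ∧ n - d + ℓ ≤ u.val))
  symm := by constructor; intro u v h; exact ⟨h.1.symm, by tauto⟩
  loopless := by constructor; intro v h; exact h.1 rfl

/-- The graph `H'_{n,d,ℓ}`: a complete graph on `{0, …, n-d+ℓ-1}` and a complete graph on
`{n-d-1, …, n-1}` sharing `ℓ+1` vertices. -/
def H'graph (n d ℓ : ℕ) : SimpleGraph (Fin n) where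
  Adj u v := u ≠ v ∧ ((u.val < n - d + ℓ ∧ v.val < n - d + ℓ) ∨
    (n - d - 1 ≤ u.val ∧ n - d - 1 ≤ v.val))
  symm := by constructor; intro u v h; exact ⟨h.1.symm, by tauto⟩
  loopless := by constructor; intro v h; exact h.1 rfl

/-- `h_r(n,d,ℓ) = C(n-d+ℓ, r) + (d-ℓ) C(d, r-1)`. -/
def hrfun (n d r ℓ : ℕ) : ℕ := Nat.choose (n - d + ℓ) r + (d - ℓ) * Nat.choose d (r - 1)

/-- `h(n,d,ℓ) = C(n-d+ℓ, 2) + (d-ℓ) d`. -/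
def hfun (n d ℓ : ℕ) : ℕ := Nat.choose (n - d + ℓ) 2 + (d - ℓ) * d

/-- The number of `r`-cliques of `G`. -/
noncomputable def cliqueCount {V : Type*} (G : SimpleGraph V) (r : ℕ) : ℕ :=
  {s : Finset V | G.IsNClique r s}.ncard

/-- `G` is `ℓ`-saturated: not `ℓ`-hamiltonian, but adding any edge makes it `ℓ`-hamiltonian. -/
def SimpleGraph.IsLSaturated {V : Type*} [DecidableEq V] (G : SimpleGraph V) (ℓ : ℕ) : Prop :=
  ¬ G.IsLHamiltonian ℓ ∧
    ∀ u v : V, u ≠ v → ¬ G.Adj u v → (G ⊔ SimpleGraph.edge u v).IsLHamiltonian ℓ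

/-!
The `ℓ + 1` shared vertices `S` separate the two cliques of `H'_{n,d,ℓ}`, so a hamiltonian cycle
has at least two edges from `S` to each side. Counting the `2(ℓ + 1)` ends of cycle edges at
vertices of `S`, these four edges together with `ℓ` prescribed cycle edges inside `S` would need
`2ℓ + 4` of them. A path through `S` is such a set of prescribed edges.
-/

open Finset

namespace SimpleGraph

variable {V : Type*}

lemma IsLinearForest.anti {F G : SimpleGraph V} (hFG : F ≤ G) (hG : G.IsLinearForest) :
    F.IsLinearForest :=
  ⟨hG.1.anti hFG, fun v a b c ha hb hc => hG.2 v a b c (hFG ha) (hFG hb) (hFG hc)⟩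

lemma pathGraph_isAcyclic (n : ℕ) : (pathGraph n).IsAcyclic := by
  intro u c hc
  obtain ⟨m, hm, hmin⟩ := c.support.toFinset.exists_min_image Fin.val ⟨u, by simp⟩
  rw [List.mem_toFinset] at hm
  obtain ⟨a, b, hab, hnbr⟩ := Set.ncard_eq_two.mp (hc.ncard_neighborSet_toSubgraph_eq_two hm)
  have hsucc : ∀ w ∈ c.toSubgraph.neighborSet m, w.val = m.val + 1 := by
    intro w hw
    have hadj := pathGraph_adj.mp (c.toSubgraph.adj_sub hw)
    have := hmin w (List.mem_toFinset.mpr (Walk.mem_support_of_adj_toSubgraph hw.symm))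
    omega
  exact hab (Fin.ext ((hsucc a (by simp [hnbr])).trans (hsucc b (by simp [hnbr])).symm))

lemma pathGraph_isLinearForest (n : ℕ) : (pathGraph n).IsLinearForest := by
  refine ⟨pathGraph_isAcyclic n, fun v a b c ha hb hc => ?_⟩
  rw [pathGraph_adj] at ha hb hc
  simp only [Fin.ext_iff]
  omega

section pathSegment

def pathSegment {n : ℕ} (a ℓ : ℕ) (h : a + ℓ < n) : SimpleGraph (Fin n) :=
  fromEdgeSet (Set.range fun i : Fin ℓ => s(⟨a + i, by omega⟩, ⟨a + i + 1, by omega⟩))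

variable {n a ℓ : ℕ} {h : a + ℓ < n}

lemma pathSegment_adj {u w : Fin n} :
    (pathSegment a ℓ h).Adj u w ↔ (a ≤ u.val ∧ u.val < a + ℓ ∧ u.val + 1 = w.val) ∨
      (a ≤ w.val ∧ w.val < a + ℓ ∧ w.val + 1 = u.val) := by
  simp only [pathSegment, fromEdgeSet_adj, Set.mem_range, Sym2.eq_iff, Fin.ext_iff, ne_eq]
  constructor
  · rintro ⟨⟨i, hi⟩, -⟩
    omega
  · rintro (hu | hw)
    · exact ⟨⟨⟨u.val - a, by omega⟩, by dsimp only; omega⟩, by omega⟩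
    · exact ⟨⟨⟨w.val - a, by omega⟩, by dsimp only; omega⟩, by omega⟩

lemma ncard_edgeSet_pathSegment : (pathSegment a ℓ h).edgeSet.ncard = ℓ := by
  have hinj : Function.Injective fun i : Fin ℓ =>
      (s(⟨a + i, by omega⟩, ⟨a + i + 1, by omega⟩) : Sym2 (Fin n)) := by
    intro i j hij
    simp only [Sym2.eq_iff, Fin.ext_iff] at hij
    omega
  rw [pathSegment, edgeSet_fromEdgeSet, sdiff_eq_left.mpr, Set.ncard_range_of_injective hinj,
    Nat.card_eq_fintype_card, Fintype.card_fin]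
  refine Set.disjoint_left.mpr ?_
  rintro - ⟨i, rfl⟩ hdiag
  simp [Fin.ext_iff] at hdiag

lemma pathSegment_le_pathGraph : pathSegment a ℓ h ≤ pathGraph n := fun u w huw => by
  rw [pathSegment_adj] at huw
  rw [pathGraph_adj]
  omega

lemma isLinearForest_pathSegment : (pathSegment a ℓ h).IsLinearForest :=
  (pathGraph_isLinearForest n).anti pathSegment_le_pathGraph

lemma support_pathSegment_subset :
    (pathSegment a ℓ h).support ⊆ {v | a ≤ v.val ∧ v.val ≤ a + ℓ} := by
  intro v hv
  rw [SimpleGraph.mem_support] at hv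
  obtain ⟨w, hvw⟩ := hv
  rw [pathSegment_adj] at hvw
  simp only [Set.mem_ofPred_eq]
  omega

end pathSegment

lemma sum_degree_eq_two_mul_ncard_edgeSet_of_support_subset [Fintype V] {F : SimpleGraph V}
    [DecidableRel F.Adj] {S : Finset V} (hFS : F.support ⊆ S) :
    ∑ v ∈ S, F.degree v = 2 * F.edgeSet.ncard := by
  rw [sum_subset (subset_univ S) fun v _ hv =>
      (F.degree_eq_zero_iff_notMem_support v).mpr fun h => hv (hFS h),
    sum_degrees_eq_twice_card_edges, Set.ncard_eq_toFinset_card']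
  rfl

namespace Walk

variable {G : SimpleGraph V} [DecidableEq V]

lemma IsTrail.exists_two_boundary_edges {u a b : V} {c : G.Walk u u} (hc : c.IsTrail)
    {P : Set V} (ha : a ∈ c.support) (hb : b ∈ c.support) (haP : a ∈ P) (hbP : b ∉ P) :
    ∃ x₁ y₁ x₂ y₂, x₁ ∈ P ∧ y₁ ∉ P ∧ x₂ ∈ P ∧ y₂ ∉ P ∧
      s(x₁, y₁) ∈ c.edges ∧ s(x₂, y₂) ∈ c.edges ∧ s(x₁, y₁) ≠ s(x₂, y₂) := by
  set c' := c.rotate a ha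
  have hb' : b ∈ c'.support := (c.mem_support_rotate_iff a ha).mpr hb
  have hsub : ∀ e ∈ c'.edges, e ∈ c.edges := fun e he => (c.rotate_edges a ha).mem_iff.mp he
  obtain ⟨d₁, hd₁, hd₁P, hd₁P'⟩ := (c'.takeUntil b hb').exists_boundary_dart P haP hbP
  obtain ⟨d₂, hd₂, hd₂P, hd₂P'⟩ :=
    (c'.dropUntil b hb').exists_boundary_dart Pᶜ hbP (Set.notMem_compl_iff.mpr haP)
  have he₁ : d₁.edge ∈ (c'.takeUntil b hb').edges := List.mem_map_of_mem hd₁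
  have he₂ : d₂.edge ∈ (c'.dropUntil b hb').edges := List.mem_map_of_mem hd₂
  refine ⟨d₁.fst, d₁.snd, d₂.snd, d₂.fst, hd₁P, hd₁P', Set.notMem_compl_iff.mp hd₂P', hd₂P,
    hsub _ (c'.edges_takeUntil_subset_edges hb' he₁), ?_, ?_⟩
  · rw [Sym2.eq_swap]
    exact hsub _ (c'.edges_dropUntil_subset_edges hb' he₂)
  · intro heq
    rw [Sym2.eq_swap (a := d₂.snd)] at heq
    have hedge : d₁.edge = d₂.edge := heq
    exact (hc.rotate ha).disjoint_edges_takeUntil_dropUntil hb' he₁ (hedge ▸ he₂)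

variable [Fintype V]

lemma IsCycle.degree_add_card_filter_compl_le {u v : V} {c : G.Walk u u} (hc : c.IsCycle)
    (hv : v ∈ c.support) {F : SimpleGraph V} [DecidableRel F.Adj]
    (hFc : ∀ e ∈ F.edgeSet, e ∈ c.edges) {S : Finset V} (hFS : F.support ⊆ S) :
    F.degree v + #{w ∈ Sᶜ | s(v, w) ∈ c.edges} ≤ 2 := by
  have htwo : #{w | s(v, w) ∈ c.edges} = 2 := by
    rw [← hc.ncard_neighborSet_toSubgraph_eq_two hv, ← Set.ncard_coe_finset]
    congr 1
    ext w
    simp [adj_toSubgraph_iff_mem_edges]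
  have hsub : F.neighborFinset v ⊆ {w ∈ S | s(v, w) ∈ c.edges} := fun w hw => by
    rw [mem_neighborFinset] at hw
    exact mem_filter.mpr ⟨hFS (F.mem_support.mpr ⟨v, hw.symm⟩), hFc _ hw⟩
  calc F.degree v + #{w ∈ Sᶜ | s(v, w) ∈ c.edges}
      ≤ #{w ∈ S | s(v, w) ∈ c.edges} + #{w ∈ Sᶜ | s(v, w) ∈ c.edges} := by
        rw [← card_neighborFinset_eq_degree]
        gcongr
    _ = #{w | s(v, w) ∈ c.edges} := by
        rw [← card_union_of_disjoint (disjoint_filter_filter disjoint_compl_right),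
          ← filter_union, union_compl]
    _ = 2 := htwo


lemma IsHamiltonianCycle.four_le_sum_card_filter_compl {u : V} {c : G.Walk u u}
    (hc : c.IsHamiltonianCycle) {S : Finset V} {X : Set V} (hXS : Disjoint X S)
    (hX : ∀ v w, v ∈ X → G.Adj v w → w ∈ X ∨ w ∈ S) {x y : V} (hx : x ∈ X) (hy : y ∉ X)
    (hyS : y ∉ S) :
    4 ≤ ∑ s ∈ S, #{w ∈ Sᶜ | s(s, w) ∈ c.edges} := by
  classical
  set T := S.sigma fun s => ({w ∈ Sᶜ | s(s, w) ∈ c.edges} : Finset V)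
  have hmem : ∀ {s w}, s ∈ S → w ∉ S → s(w, s) ∈ c.edges → (⟨s, w⟩ : Σ _ : V, V) ∈ T :=
    fun hs hw he => mem_sigma.mpr ⟨hs, mem_filter.mpr ⟨mem_compl.mpr hw, Sym2.eq_swap ▸ he⟩⟩
  have hne : ∀ {s₁ w₁ s₂ w₂ : V}, s(w₁, s₁) ≠ s(w₂, s₂) →
      (⟨s₁, w₁⟩ : Σ _ : V, V) ≠ ⟨s₂, w₂⟩ := by
    rintro s₁ w₁ s₂ w₂ hne ⟨⟩
    exact hne rfl
  have hnotS : ∀ {v}, v ∈ X → v ∉ S := fun hv hvS => Set.disjoint_left.mp hXS hv hvS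
  have htrail := hc.isCycle.isTrail
  obtain ⟨x₁, s₁, x₂, s₂, hx₁, hs₁, hx₂, hs₂, he₁, he₂, hne₁₂⟩ :=
    htrail.exists_two_boundary_edges (hc.mem_support x) (hc.mem_support y) hx hy
  have hXout : ∀ {v s}, v ∈ X → s ∉ X → s(v, s) ∈ c.edges → s ∈ S :=
    fun hv hs he => (hX _ _ hv (c.adj_of_mem_edges he)).resolve_left hs
  have hcardX : 1 < #{p ∈ T | p.2 ∈ X} := one_lt_card_iff.mpr
    ⟨_, _, mem_filter.mpr ⟨hmem (hXout hx₁ hs₁ he₁) (hnotS hx₁) he₁, hx₁⟩,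
      mem_filter.mpr ⟨hmem (hXout hx₂ hs₂ he₂) (hnotS hx₂) he₂, hx₂⟩, hne hne₁₂⟩
  obtain ⟨y₁, t₁, y₂, t₂, hy₁, ht₁, hy₂, ht₂, hf₁, hf₂, hne₁₂'⟩ :=
    htrail.exists_two_boundary_edges (P := {v | v ∉ X ∧ v ∉ S}) (hc.mem_support y)
      (hc.mem_support x) ⟨hy, hyS⟩ fun h => h.1 hx
  have hYout : ∀ {v t}, v ∉ X ∧ v ∉ S → ¬ (t ∉ X ∧ t ∉ S) → s(v, t) ∈ c.edges → t ∈ S := by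
    intro v t hv ht he
    by_contra htS
    have htX : t ∈ X := by_contra fun htX => ht ⟨htX, htS⟩
    rcases hX _ _ htX (c.adj_of_mem_edges he).symm with h | h
    exacts [hv.1 h, hv.2 h]
  have hcardY : 1 < #{p ∈ T | p.2 ∉ X} := one_lt_card_iff.mpr
    ⟨_, _, mem_filter.mpr ⟨hmem (hYout hy₁ ht₁ hf₁) hy₁.2 hf₁, hy₁.1⟩,
      mem_filter.mpr ⟨hmem (hYout hy₂ ht₂ hf₂) hy₂.2 hf₂, hy₂.1⟩, hne hne₁₂'⟩
  rw [← card_sigma, ← card_filter_add_card_filter_not (s := T) (fun p => p.2 ∈ X)]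
  omega

lemma IsHamiltonianCycle.ncard_edgeSet_add_two_le {u : V} {c : G.Walk u u}
    (hc : c.IsHamiltonianCycle) {F : SimpleGraph V} (hFc : ∀ e ∈ F.edgeSet, e ∈ c.edges)
    {S : Finset V} (hFS : F.support ⊆ S) {X : Set V} (hXS : Disjoint X S)
    (hX : ∀ v w, v ∈ X → G.Adj v w → w ∈ X ∨ w ∈ S) {x y : V} (hx : x ∈ X) (hy : y ∉ X)
    (hyS : y ∉ S) :
    F.edgeSet.ncard + 2 ≤ #S := by
  classical
  have hcross := hc.four_le_sum_card_filter_compl hXS hX hx hy hyS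
  have hdeg := sum_degree_eq_two_mul_ncard_edgeSet_of_support_subset hFS
  have hle : ∑ s ∈ S, (F.degree s + #{w ∈ Sᶜ | s(s, w) ∈ c.edges}) ≤ ∑ _s ∈ S, 2 :=
    sum_le_sum fun s _ => hc.isCycle.degree_add_card_filter_compl_le (hc.mem_support s) hFc hFS
  rw [sum_add_distrib, sum_const, smul_eq_mul] at hle
  omega

end Walk

end SimpleGraph

lemma H'graph_no_hamiltonian_extension {n d ℓ : ℕ} (hld : ℓ < d) (hn : d + 2 ≤ n)
    {F : SimpleGraph (Fin n)} (hcard : F.edgeSet.ncard = ℓ)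
    (hFS : F.support ⊆ {v | n - d - 1 ≤ v.val ∧ v.val < n - d + ℓ}) :
    ¬ ∃ (v : Fin n) (c : (H'graph n d ℓ).Walk v v), c.IsHamiltonianCycle ∧
        ∀ e ∈ F.edgeSet, e ∈ c.edges := by
  rintro ⟨v, c, hc, hFc⟩
  set S := Finset.Ico (⟨n - d - 1, by omega⟩ : Fin n) ⟨n - d + ℓ, by omega⟩
  have hS : ∀ v, v ∈ S ↔ n - d - 1 ≤ v.val ∧ v.val < n - d + ℓ := fun v => by
    rw [mem_Ico, Fin.le_def, Fin.lt_def]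
  have hcardS : #S = ℓ + 1 := by
    rw [Fin.card_Ico]
    dsimp only
    omega
  set X : Set (Fin n) := {v | v.val < n - d - 1}
  have hXS : Disjoint X S :=
    Set.disjoint_left.mpr fun v hv hvS => Nat.not_lt.mpr ((hS v).mp hvS).1 hv
  have hX : ∀ v w, v ∈ X → (H'graph n d ℓ).Adj v w → w ∈ X ∨ w ∈ S := by
    rintro v w hv ⟨-, hvw⟩
    change v.val < n - d - 1 at hv
    change w.val < n - d - 1 ∨ _
    rw [hS]
    omega
  have hbound := hc.ncard_edgeSet_add_two_le hFc (fun v hv => (hS v).mpr (hFS hv)) hXS hX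
    (x := ⟨0, by omega⟩) (y := ⟨n - 1, by omega⟩) (show 0 < n - d - 1 by omega)
    (show ¬ n - 1 < n - d - 1 by omega)
    (fun hyS => by have := (hS _).mp hyS; dsimp only at this; omega)
  omega

/-- `H'_{n,d,ℓ}` is not `ℓ`-hamiltonian; more precisely, no path with `ℓ` edges spanning the
`ℓ+1` identified (dominating) vertices `{n-d-1, …, n-d+ℓ-1}` extends to a hamiltonian cycle
of `H'_{n,d,ℓ}`. -/
theorem H'graph_not_lHamiltonian {n d ℓ : ℕ} (hld : ℓ < d) (hd : d ≤ (n + ℓ - 1) / 2) :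
    ¬ (H'graph n d ℓ).IsLHamiltonian ℓ ∧
    ∀ F : SimpleGraph (Fin n), F ≤ H'graph n d ℓ → F.IsLinearForest → F.edgeSet.ncard = ℓ →
      F.support = {v : Fin n | n - d - 1 ≤ v.val ∧ v.val < n - d + ℓ} →
      ¬ ∃ (v : Fin n) (c : (H'graph n d ℓ).Walk v v), c.IsHamiltonianCycle ∧
          ∀ e ∈ F.edgeSet, e ∈ c.edges := by
  have hn : d + 2 ≤ n := by omega
  refine ⟨fun hham => ?_, fun F _ _ hcard hsupp =>
    H'graph_no_hamiltonian_extension hld hn hcard hsupp.subset⟩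
  have hseg : n - d - 1 + ℓ < n := by omega
  have hPS : (pathSegment (n - d - 1) ℓ hseg).support ⊆
      {v | n - d - 1 ≤ v.val ∧ v.val < n - d + ℓ} :=
    support_pathSegment_subset.trans fun v hv => ⟨hv.1, by have := hv.2; omega⟩
  have hPH : pathSegment (n - d - 1) ℓ hseg ≤ H'graph n d ℓ := fun u w huw =>
    ⟨huw.ne, Or.inl ⟨(hPS ⟨w, huw⟩).2, (hPS ⟨u, huw.symm⟩).2⟩⟩
  exact H'graph_no_hamiltonian_extension hld hn ncard_edgeSet_pathSegment hPS
    (hham _ hPH isLinearForest_pathSegment ncard_edgeSet_pathSegment)
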